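/- arXiv:2210.11611 — 2 statements merged into one kernel-verified Lean document; each statement's English description precedes it below -/
import Mathlib

section
/- In the parsimonious bivariate Matérn model, the constraint on the colocated cross-correlation ρ12 = β12 · [Γ(ν11 + d/2)^{1/2}/Γ(ν11)^{1/2}] · [Γ(ν22 + d/2)^{1/2}/Γ(ν22)^{1/2}] · [Γ(ν12)/Γ(ν12 + d/2)] with ν12 = (ν11 + ν22)/2 and |β12| ≤ 1 implies |ρ12| ≤ 1, with equality |ρ12| = 1 only if ν11 = ν22 and |β12| = 1. -/
/-!
With `c = d / 2` and `B` the Beta function, the factor multiplying `β₁₂` is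
`B(ν₁₂, c) / √(B(ν₁₁, c) B(ν₂₂, c))`, since the `Γ(c)` cancel. So everything reduces to strict
midpoint log-convexity of `p ↦ B(p, c) = ∫₀¹ x^(p-1) (1-x)^(c-1) dx`. Integrating the pointwise
identity `s x^(a-1) + s⁻¹ x^(b-1) - 2 x^((a+b)/2-1) = s⁻¹ (s x^((a-1)/2) - x^((b-1)/2))²`
against `(1-x)^(c-1)` gives `2 B(m, c) ≤ s B(a, c) + s⁻¹ B(b, c)`, and `s = B(m, c) / B(a, c)`
turns this into `B(m, c)² ≤ B(a, c) B(b, c)`. For `a ≠ b` the square vanishes at most at one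
point of `(0, 1)`, which makes the inequality strict.
-/

open Real MeasureTheory Set ProbabilityTheory

lemma ofReal_cpow_mul_one_sub_cpow {p q x : ℝ} (hx : x ∈ Ioo (0 : ℝ) 1) :
    ((x ^ (p - 1) * (1 - x) ^ (q - 1) : ℝ) : ℂ)
      = (x : ℂ) ^ ((p : ℂ) - 1) * (1 - (x : ℂ)) ^ ((q : ℂ) - 1) := by
  push_cast [Complex.ofReal_cpow hx.1.le, Complex.ofReal_cpow (sub_pos.2 hx.2).le]
  rfl

lemma integrableOn_rpow_mul_one_sub_rpow {p q : ℝ} (hp : 0 < p) (hq : 0 < q) :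
    IntegrableOn (fun x : ℝ => x ^ (p - 1) * (1 - x) ^ (q - 1)) (Ioo 0 1) := by
  have hC := Complex.betaIntegral_convergent (u := p) (v := q) (by simpa) (by simpa)
  rw [intervalIntegrable_iff_integrableOn_Ioc_of_le zero_le_one] at hC
  have hre : IntegrableOn (fun x : ℝ =>
      ((x : ℂ) ^ ((p : ℂ) - 1) * (1 - (x : ℂ)) ^ ((q : ℂ) - 1)).re) (Ioo 0 1) :=
    (hC.mono_set Ioo_subset_Ioc_self).re
  refine hre.congr_fun (fun x hx => ?_) measurableSet_Ioo
  simp only [← ofReal_cpow_mul_one_sub_cpow hx, Complex.ofReal_re]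

lemma integral_rpow_mul_one_sub_rpow {p q : ℝ} (hp : 0 < p) (hq : 0 < q) :
    ∫ x in Ioo (0 : ℝ) 1, x ^ (p - 1) * (1 - x) ^ (q - 1) = beta p q := by
  apply Complex.ofReal_injective
  rw [← integral_complex_ofReal, setIntegral_congr_fun measurableSet_Ioo
    (fun x hx => ofReal_cpow_mul_one_sub_cpow hx), ← integral_Ioc_eq_integral_Ioo,
    ← intervalIntegral.integral_of_le zero_le_one, ← Complex.betaIntegral,
    Complex.betaIntegral_eq_Gamma_mul_div _ _ (by simpa) (by simpa), beta]
  push_cast [← Complex.ofReal_add, Complex.Gamma_ofReal]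
  rfl

lemma subsingleton_setOf_mul_rpow_eq_rpow {s u v : ℝ} (huv : u ≠ v) :
    {x : ℝ | 0 < x ∧ s * x ^ u = x ^ v}.Subsingleton := by
  have hpow : ∀ x ∈ {x : ℝ | 0 < x ∧ s * x ^ u = x ^ v}, x ^ (v - u) = s := by
    rintro x ⟨hx, hxs⟩
    rw [rpow_sub hx, ← hxs, mul_div_cancel_right₀ _ (rpow_pos_of_pos hx u).ne']
  intro x hx y hy
  exact (rpow_left_inj hx.1.le hy.1.le (sub_ne_zero.2 huv.symm)).1
    ((hpow x hx).trans (hpow y hy).symm)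

lemma rpow_midpoint_gap {a b s x : ℝ} (hx : 0 < x) (hs : 0 < s) :
    s * x ^ (a - 1) + s⁻¹ * x ^ (b - 1) - 2 * x ^ ((a + b) / 2 - 1)
      = s⁻¹ * (s * x ^ ((a - 1) / 2) - x ^ ((b - 1) / 2)) ^ 2 := by
  have hsq : ∀ u : ℝ, x ^ u = x ^ (u / 2) * x ^ (u / 2) := fun u => by
    rw [← rpow_add hx, add_halves]
  rw [hsq (a - 1), hsq (b - 1), show (a + b) / 2 - 1 = (a - 1) / 2 + (b - 1) / 2 by ring,
    rpow_add hx]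
  field_simp
  ring

section BetaMidpoint

variable {a b c s : ℝ}

lemma beta_midpoint_gap (ha : 0 < a) (hb : 0 < b) (hc : 0 < c) (hs : 0 < s) :
    IntegrableOn (fun x : ℝ =>
        s⁻¹ * (s * x ^ ((a - 1) / 2) - x ^ ((b - 1) / 2)) ^ 2 * (1 - x) ^ (c - 1)) (Ioo 0 1) ∧
    s * beta a c + s⁻¹ * beta b c - 2 * beta ((a + b) / 2) c
      = ∫ x in Ioo (0 : ℝ) 1,
          s⁻¹ * (s * x ^ ((a - 1) / 2) - x ^ ((b - 1) / 2)) ^ 2 * (1 - x) ^ (c - 1) := by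
  have hm : 0 < (a + b) / 2 := by positivity
  have hA := (integrableOn_rpow_mul_one_sub_rpow ha hc).const_mul s
  have hB := (integrableOn_rpow_mul_one_sub_rpow hb hc).const_mul s⁻¹
  have hM := (integrableOn_rpow_mul_one_sub_rpow hm hc).const_mul 2
  have hpoint : EqOn (fun x : ℝ => s * (x ^ (a - 1) * (1 - x) ^ (c - 1))
      + s⁻¹ * (x ^ (b - 1) * (1 - x) ^ (c - 1))
      - 2 * (x ^ ((a + b) / 2 - 1) * (1 - x) ^ (c - 1)))
      (fun x => s⁻¹ * (s * x ^ ((a - 1) / 2) - x ^ ((b - 1) / 2)) ^ 2 * (1 - x) ^ (c - 1))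
      (Ioo 0 1) := fun x hx => by
    linear_combination (1 - x) ^ (c - 1) * rpow_midpoint_gap (a := a) (b := b) hx.1 hs
  have hAB : IntegrableOn (fun x : ℝ => s * (x ^ (a - 1) * (1 - x) ^ (c - 1))
      + s⁻¹ * (x ^ (b - 1) * (1 - x) ^ (c - 1))) (Ioo 0 1) := hA.add hB
  refine ⟨IntegrableOn.congr_fun (hAB.sub hM) hpoint measurableSet_Ioo, ?_⟩
  rw [← setIntegral_congr_fun measurableSet_Ioo hpoint, integral_sub hAB hM,
    integral_add hA hB, integral_const_mul, integral_const_mul, integral_const_mul,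
    integral_rpow_mul_one_sub_rpow ha hc, integral_rpow_mul_one_sub_rpow hb hc,
    integral_rpow_mul_one_sub_rpow hm hc]

lemma two_mul_beta_midpoint_le (ha : 0 < a) (hb : 0 < b) (hc : 0 < c) (hs : 0 < s) :
    2 * beta ((a + b) / 2) c ≤ s * beta a c + s⁻¹ * beta b c := by
  rw [← sub_nonneg, (beta_midpoint_gap ha hb hc hs).2]
  exact setIntegral_nonneg measurableSet_Ioo fun x hx => by
    have := hx.1; have := sub_pos.2 hx.2; positivity

lemma two_mul_beta_midpoint_lt (ha : 0 < a) (hb : 0 < b) (hc : 0 < c) (hs : 0 < s)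
    (hab : a ≠ b) : 2 * beta ((a + b) / 2) c < s * beta a c + s⁻¹ * beta b c := by
  set g : ℝ → ℝ := fun x => s⁻¹ * (s * x ^ ((a - 1) / 2) - x ^ ((b - 1) / 2)) ^ 2 * (1 - x) ^ (c - 1)
  have hdiag : {x : ℝ | 0 < x ∧ s * x ^ ((a - 1) / 2) = x ^ ((b - 1) / 2)}.Subsingleton :=
    subsingleton_setOf_mul_rpow_eq_rpow (by contrapose! hab; linarith)
  have hsupp : Ioo 0 1 \ {x : ℝ | 0 < x ∧ s * x ^ ((a - 1) / 2) = x ^ ((b - 1) / 2)}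
      ⊆ Function.support g ∩ Ioo 0 1 := by
    rintro x ⟨hx, hxd⟩
    refine ⟨?_, hx⟩
    have : s * x ^ ((a - 1) / 2) - x ^ ((b - 1) / 2) ≠ 0 := sub_ne_zero.2 fun h => hxd ⟨hx.1, h⟩
    have := sub_pos.2 hx.2
    simp only [Function.mem_support, g]
    positivity
  obtain ⟨hint, hgap⟩ := beta_midpoint_gap ha hb hc hs
  rw [← sub_pos, hgap, setIntegral_pos_iff_support_of_nonneg_ae _ hint]
  · calc (0 : ENNReal) < volume (Ioo (0 : ℝ) 1) := by simp
      _ = volume (Ioo 0 1 \ {x : ℝ | 0 < x ∧ s * x ^ ((a - 1) / 2) = x ^ ((b - 1) / 2)}) :=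
        (measure_sdiff_null (hdiag.measure_zero volume)).symm
      _ ≤ volume (Function.support g ∩ Ioo 0 1) := measure_mono hsupp
  · refine ae_restrict_of_forall_mem measurableSet_Ioo fun x hx => ?_
    have := hx.1; have := sub_pos.2 hx.2
    simp only [Pi.zero_apply]
    positivity

lemma sq_beta_midpoint_le (ha : 0 < a) (hb : 0 < b) (hc : 0 < c) :
    beta ((a + b) / 2) c ^ 2 ≤ beta a c * beta b c := by
  have hA := beta_pos ha hc
  have hM := beta_pos (show 0 < (a + b) / 2 by positivity) hc
  have h := two_mul_beta_midpoint_le ha hb hc (div_pos hM hA)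
  rw [inv_div, div_mul_cancel₀ _ hA.ne', div_mul_eq_mul_div] at h
  rw [sq, ← le_div_iff₀ hM]
  linarith

lemma sq_beta_midpoint_lt (ha : 0 < a) (hb : 0 < b) (hc : 0 < c) (hab : a ≠ b) :
    beta ((a + b) / 2) c ^ 2 < beta a c * beta b c := by
  have hA := beta_pos ha hc
  have hM := beta_pos (show 0 < (a + b) / 2 by positivity) hc
  have h := two_mul_beta_midpoint_lt ha hb hc (div_pos hM hA) hab
  rw [inv_div, div_mul_cancel₀ _ hA.ne', div_mul_eq_mul_div] at h
  rw [sq, ← lt_div_iff₀ hM]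
  linarith

end BetaMidpoint

noncomputable def maternCrossFactor (a b c : ℝ) : ℝ :=
  √(Gamma (a + c)) / √(Gamma a) * (√(Gamma (b + c)) / √(Gamma b)) *
    (Gamma ((a + b) / 2) / Gamma ((a + b) / 2 + c))

section MaternCrossFactor

variable {a b c : ℝ}

lemma maternCrossFactor_nonneg (ha : 0 < a) (hb : 0 < b) (hc : 0 < c) :
    0 ≤ maternCrossFactor a b c := by
  have := Gamma_pos_of_pos (show 0 < (a + b) / 2 by positivity)
  have := Gamma_pos_of_pos (show 0 < (a + b) / 2 + c by positivity)
  unfold maternCrossFactor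
  positivity

lemma maternCrossFactor_sq (ha : 0 < a) (hb : 0 < b) (hc : 0 < c) :
    maternCrossFactor a b c ^ 2 = beta ((a + b) / 2) c ^ 2 / (beta a c * beta b c) := by
  have hΓa := Gamma_pos_of_pos ha
  have hΓb := Gamma_pos_of_pos hb
  have hΓc := Gamma_pos_of_pos hc
  have hΓac := Gamma_pos_of_pos (add_pos ha hc)
  have hΓbc := Gamma_pos_of_pos (add_pos hb hc)
  rw [maternCrossFactor, mul_pow, mul_pow, div_pow, div_pow, div_pow, sq_sqrt hΓac.le,
    sq_sqrt hΓa.le, sq_sqrt hΓbc.le, sq_sqrt hΓb.le, beta, beta, beta]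
  field_simp

lemma maternCrossFactor_le_one (ha : 0 < a) (hb : 0 < b) (hc : 0 < c) :
    maternCrossFactor a b c ≤ 1 := by
  refine pow_le_one_iff_of_nonneg (maternCrossFactor_nonneg ha hb hc) two_ne_zero |>.1 ?_
  rw [maternCrossFactor_sq ha hb hc, div_le_one (mul_pos (beta_pos ha hc) (beta_pos hb hc))]
  exact sq_beta_midpoint_le ha hb hc

lemma maternCrossFactor_lt_one (ha : 0 < a) (hb : 0 < b) (hc : 0 < c) (hab : a ≠ b) :
    maternCrossFactor a b c < 1 := by
  refine pow_lt_one_iff_of_nonneg (maternCrossFactor_nonneg ha hb hc) two_ne_zero |>.1 ?_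
  rw [maternCrossFactor_sq ha hb hc, div_lt_one (mul_pos (beta_pos ha hc) (beta_pos hb hc))]
  exact sq_beta_midpoint_lt ha hb hc hab

end MaternCrossFactor

/-- In the parsimonious bivariate Matérn model, the constraint on the colocated
cross-correlation `ρ₁₂` implies `|ρ₁₂| ≤ 1`, with `|ρ₁₂| = 1` only if `ν₁₁ = ν₂₂`
and `|β₁₂| = 1`. -/
theorem parsimonious_matern_correlation_bound
    (ν₁₁ ν₂₂ : ℝ) (hν₁₁ : 0 < ν₁₁) (hν₂₂ : 0 < ν₂₂)
    (d : ℕ) (hd : 1 ≤ d)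
    (β₁₂ : ℝ) (hβ : |β₁₂| ≤ 1)
    (ν₁₂ : ℝ) (hν₁₂ : ν₁₂ = (ν₁₁ + ν₂₂) / 2)
    (ρ₁₂ : ℝ)
    (hρ : ρ₁₂ = β₁₂ *
      (Real.sqrt (Real.Gamma (ν₁₁ + d / 2)) / Real.sqrt (Real.Gamma ν₁₁)) *
      (Real.sqrt (Real.Gamma (ν₂₂ + d / 2)) / Real.sqrt (Real.Gamma ν₂₂)) *
      (Real.Gamma ν₁₂ / Real.Gamma (ν₁₂ + d / 2))) :
    |ρ₁₂| ≤ 1 ∧ (|ρ₁₂| = 1 → ν₁₁ = ν₂₂ ∧ |β₁₂| = 1) := by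
  have hc : (0 : ℝ) < d / 2 := div_pos (Nat.cast_pos.2 hd) two_pos
  set F := maternCrossFactor ν₁₁ ν₂₂ (d / 2)
  have hF0 : 0 ≤ F := maternCrossFactor_nonneg hν₁₁ hν₂₂ hc
  have hF1 : F ≤ 1 := maternCrossFactor_le_one hν₁₁ hν₂₂ hc
  have hρF : ρ₁₂ = β₁₂ * F := by
    rw [hρ, hν₁₂]
    simp only [F, maternCrossFactor]
    ring
  rw [hρF, abs_mul, abs_of_nonneg hF0]
  refine ⟨mul_le_one₀ hβ hF0 hF1, fun h => ?_⟩
  have hF : F = 1 := by nlinarith [abs_nonneg β₁₂]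
  refine ⟨?_, by rwa [hF, mul_one] at h⟩
  by_contra hne
  exact (maternCrossFactor_lt_one hν₁₁ hν₂₂ hc hne).ne hF
end

section
/- Among all real symmetric matrices, the matrix Q Λ⁺ Q^T, where Λ⁺ replaces negative eigenvalues of Σ = Q Λ Q^T by zero, is a closest positive semidefinite matrix to Σ in the Frobenius norm: for every positive semidefinite symmetric matrix P, ‖Σ − Q Λ⁺ Q^T‖_F ≤ ‖Σ − P‖_F. -/
/-!
Conjugating by the orthogonal `Q` preserves the Frobenius norm, so `‖Σ - P‖_F = ‖Λ - B‖_F`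
with `B = Qᵀ P Q` again positive semidefinite, while `‖Σ - Q Λ⁺ Qᵀ‖_F = ‖Λ - Λ⁺‖_F`.
Dropping the off-diagonal entries of `Λ - B` only decreases its norm, and since `B i i ≥ 0`,
each `(λᵢ - B i i)²` is at least `(λᵢ - max λᵢ 0)²`.
-/

open Matrix

/-- The Frobenius norm of a real square matrix. -/
noncomputable def frobNorm {n : ℕ} (A : Matrix (Fin n) (Fin n) ℝ) : ℝ :=
  Real.sqrt (∑ i : Fin n, ∑ j : Fin n, (A i j) ^ 2)

namespace Matrix

variable {m n R : Type*} [Fintype m] [Fintype n]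

theorem sum_sum_sq_eq_trace_transpose_mul [CommSemiring R] (M : Matrix m n R) :
    ∑ i, ∑ j, M i j ^ 2 = trace (Mᵀ * M) := by
  simp only [trace, diag, mul_apply, transpose_apply, sq]
  exact Finset.sum_comm

theorem sum_sum_sq_conj_orthogonal [DecidableEq n] [CommSemiring R] {Q : Matrix n n R}
    (hQ : Qᵀ * Q = 1) (M : Matrix n n R) :
    ∑ i, ∑ j, (Q * M * Qᵀ) i j ^ 2 = ∑ i, ∑ j, M i j ^ 2 := by
  have hconj : (Q * M * Qᵀ)ᵀ * (Q * M * Qᵀ) = Q * (Mᵀ * M) * Qᵀ := by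
    simp only [transpose_mul, transpose_transpose, Matrix.mul_assoc]
    rw [← Matrix.mul_assoc Qᵀ Q, hQ, Matrix.one_mul]
  rw [sum_sum_sq_eq_trace_transpose_mul, sum_sum_sq_eq_trace_transpose_mul, hconj,
    trace_mul_comm, ← Matrix.mul_assoc, ← Matrix.mul_assoc, hQ, Matrix.one_mul]

theorem sum_sq_diag_le_sum_sum_sq [CommRing R] [LinearOrder R] [IsStrictOrderedRing R]
    (M : Matrix n n R) : ∑ i, M i i ^ 2 ≤ ∑ i, ∑ j, M i j ^ 2 :=
  Finset.sum_le_sum fun i _ =>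
    Finset.single_le_sum (f := fun j => M i j ^ 2) (fun _ _ => sq_nonneg _) (Finset.mem_univ i)

theorem sum_sum_sq_diagonal [DecidableEq n] [CommSemiring R] (d : n → R) :
    ∑ i, ∑ j, diagonal d i j ^ 2 = ∑ i, d i ^ 2 := by
  refine Finset.sum_congr rfl fun i _ => ?_
  rw [Finset.sum_eq_single i (fun j _ hji => by simp [diagonal_apply_ne _ hji.symm])
    (by simp)]
  simp

end Matrix

theorem sq_sub_max_zero_le_sq_sub {R : Type*} [CommRing R] [LinearOrder R]
    [IsStrictOrderedRing R] {x b : R} (hb : 0 ≤ b) : (x - max x 0) ^ 2 ≤ (x - b) ^ 2 := by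
  rcases le_total 0 x with hx | hx
  · simp [max_eq_left hx, sq_nonneg]
  · rw [max_eq_right hx, sub_zero]
    nlinarith

theorem frobNorm_conj_orthogonal {n : ℕ} {Q : Matrix (Fin n) (Fin n) ℝ} (hQ : Qᵀ * Q = 1)
    (M : Matrix (Fin n) (Fin n) ℝ) : frobNorm (Q * M * Qᵀ) = frobNorm M := by
  rw [frobNorm, frobNorm, sum_sum_sq_conj_orthogonal hQ]

theorem frobNorm_diagonal_sub_posPart_le {n : ℕ} (lam : Fin n → ℝ) {B : Matrix (Fin n) (Fin n) ℝ}
    (hB : ∀ i, 0 ≤ B i i) :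
    frobNorm (diagonal lam - diagonal fun i => max (lam i) 0) ≤ frobNorm (diagonal lam - B) := by
  refine Real.sqrt_le_sqrt ?_
  rw [diagonal_sub, sum_sum_sq_diagonal]
  calc ∑ i, (lam i - max (lam i) 0) ^ 2
      ≤ ∑ i, (diagonal lam - B) i i ^ 2 := Finset.sum_le_sum fun i _ => by
        simpa using sq_sub_max_zero_le_sq_sub (x := lam i) (hB i)
    _ ≤ ∑ i, ∑ j, (diagonal lam - B) i j ^ 2 := sum_sq_diag_le_sum_sum_sq _

theorem nearest_posSemidef_frobenius_general
    {n : ℕ} (A Q : Matrix (Fin n) (Fin n) ℝ) (lam : Fin n → ℝ)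
    (hQ₁ : Q * Qᵀ = 1) (hQ₂ : Qᵀ * Q = 1)
    (hdecomp : A = Q * Matrix.diagonal lam * Qᵀ)
    (P : Matrix (Fin n) (Fin n) ℝ) (hP : P.PosSemidef) :
    frobNorm (A - Q * Matrix.diagonal (fun i => max (lam i) 0) * Qᵀ) ≤
      frobNorm (A - P) := by
  set B := Qᵀ * P * Q
  have hB : B.PosSemidef := by
    simpa [conjTranspose_eq_transpose_of_trivial] using hP.conjTranspose_mul_mul_same Q
  have hP_conj : P = Q * B * Qᵀ := by
    simp only [B, Matrix.mul_assoc, hQ₁, Matrix.mul_one]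
    rw [← Matrix.mul_assoc, hQ₁, Matrix.one_mul]
  rw [hP_conj, hdecomp, ← Matrix.sub_mul, ← Matrix.mul_sub, ← Matrix.sub_mul, ← Matrix.mul_sub,
    frobNorm_conj_orthogonal hQ₂, frobNorm_conj_orthogonal hQ₂]
  exact frobNorm_diagonal_sub_posPart_le lam fun i => hB.diag_nonneg

/-- Setting negative eigenvalues to zero yields a closest positive semidefinite matrix
in the Frobenius norm: if `Σ = Q Λ Qᵀ` is symmetric with `Q` orthogonal and `Λ⁺`
replaces the negative diagonal entries of `Λ` by `0`, then for every positive
semidefinite symmetric `P`, `‖Σ − Q Λ⁺ Qᵀ‖_F ≤ ‖Σ − P‖_F`. -/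
theorem nearest_posSemidef_frobenius
    {n : ℕ} (A Q : Matrix (Fin n) (Fin n) ℝ) (lam : Fin n → ℝ)
    (hQ₁ : Q * Qᵀ = 1) (hQ₂ : Qᵀ * Q = 1)
    (hA : A.IsSymm) (hdecomp : A = Q * Matrix.diagonal lam * Qᵀ)
    (P : Matrix (Fin n) (Fin n) ℝ) (hPsymm : P.IsSymm) (hP : P.PosSemidef) :
    frobNorm (A - Q * Matrix.diagonal (fun i => max (lam i) 0) * Qᵀ) ≤
      frobNorm (A - P) :=
  nearest_posSemidef_frobenius_general A Q lam hQ₁ hQ₂ hdecomp P hP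
end
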